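/- arXiv:2106.15455 — 2 statements merged into one kernel-verified Lean document; each statement's English description precedes it below -/
import Mathlib

section
/- Let n be a natural number and a, b, c, d real numbers such that all Pochhammer symbols (c)_k, (d)_k, (a−c−n+1)_k, (a−d−n+1)_k are nonzero for 0 ≤ k ≤ n. Then ∑_{k=0}^n [(−n)_k (a)_k (b)_k]/[(c)_k (d)_k k!] = [(c−a)_n (d−a)_n]/[(c)_n (d)_n] · ∑_{k=0}^n [(−n)_k (a)_k (a+b−c−d−n+1)_k]/[(a−c−n+1)_k (a−d−n+1)_k k!]. -/
/-- The Pochhammer symbol `(a)_k = a (a+1) ⋯ (a+k-1)` over ℝ. -/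
noncomputable def poch (a : ℝ) (k : ℕ) : ℝ := (ascPochhammer ℝ k).eval a

/-!
Both sides come from one two-term transformation of the terminating ₃F₂(1),
`₃F₂(-n, a, b; c, d) = (c - a)_n / (c)_n · ₃F₂(-n, a, d - b; d, a - c - n + 1)`,
applied twice, the second time with `(b, c, d) := (d - b, d, a - c - n + 1)`.
That transformation follows from Chu–Vandermonde, `₂F₁(-k, b; c; 1) = (c - b)_k / (c)_k`:
expand `(b)_k / (d)_k` as `₂F₁(-k, d - b; d; 1)`, interchange the two sums, and sum the inner
series by Chu–Vandermonde once more.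
-/

open Polynomial Finset

lemma poch_add (x : ℝ) (m l : ℕ) : poch x (m + l) = poch x m * poch (x + m) l := by
  simpa [poch, eval_comp] using (congrArg (eval x) (ascPochhammer_mul ℝ m l)).symm

lemma poch_ne_zero_of_add {x : ℝ} {m l : ℕ} (h : poch x (m + l) ≠ 0) :
    poch x m ≠ 0 ∧ poch (x + m) l ≠ 0 := by
  rwa [poch_add, mul_ne_zero_iff] at h

lemma poch_ne_zero_of_le {x : ℝ} {m n : ℕ} (hmn : m ≤ n) (h : poch x n ≠ 0) :
    poch x m ≠ 0 := by
  obtain ⟨l, rfl⟩ := Nat.exists_eq_add_of_le hmn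
  exact (poch_ne_zero_of_add h).1

lemma poch_reflect (x : ℝ) (m : ℕ) : poch x m = (-1) ^ m * poch (-x - m + 1) m := by
  rw [poch, ← neg_neg x, ascPochhammer_eval_neg_eq_descPochhammer,
    descPochhammer_eval_eq_ascPochhammer, poch, neg_neg]

lemma poch_neg_natCast (n k : ℕ) :
    poch (-(n : ℝ)) k = (-1) ^ k * k.factorial * n.choose k := by
  rw [poch, ascPochhammer_eval_neg_eq_descPochhammer, descPochhammer_eval_eq_descFactorial,
    Nat.descFactorial_eq_factorial_mul_choose]
  push_cast; ring

lemma poch_eq_smeval_descPochhammer (x : ℝ) (m : ℕ) :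
    poch x m = (descPochhammer ℤ m).smeval (x + m - 1) := by
  rw [descPochhammer_smeval_eq_ascPochhammer, ascPochhammer_smeval_eq_eval, poch]
  ring_nf

/-- Chu–Vandermonde for falling factorials at `-b` and `c + k - 1`, since
`(b)_j = (-1)^j (-b)(-b-1)⋯(-b-j+1)` and `(c + j)_(k-j) = (c+k-1)(c+k-2)⋯(c+j)`. -/
theorem sum_neg_one_pow_choose_mul_poch (k : ℕ) (b c : ℝ) :
    ∑ j ∈ range (k + 1), (-1) ^ j * (k.choose j : ℝ) * poch b j * poch (c + j) (k - j) =
      poch (c - b) k := by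
  rw [poch_eq_smeval_descPochhammer, show c - b + k - 1 = -b + (c + k - 1) by ring,
    Ring.descPochhammer_smeval_add _ (Commute.all _ _), Nat.sum_antidiagonal_eq_sum_range_succ_mk]
  refine sum_congr rfl fun j hj => ?_
  have hjk : j ≤ k := Nat.lt_succ_iff.mp (mem_range.mp hj)
  rw [poch_reflect b, poch_eq_smeval_descPochhammer (-b - j + 1),
    poch_eq_smeval_descPochhammer (c + j)]
  push_cast [hjk]
  ring_nf
  simp only [pow_mul', neg_one_sq, one_pow, mul_one]

/-- `₂F₁(-k, b; c; 1)`. -/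
noncomputable def hyper2F1 (k : ℕ) (b c : ℝ) : ℝ :=
  ∑ j ∈ range (k + 1), poch (-(k : ℝ)) j * poch b j / (poch c j * j.factorial)

theorem hyper2F1_eq_poch_div (k : ℕ) (b c : ℝ) (hc : poch c k ≠ 0) :
    hyper2F1 k b c = poch (c - b) k / poch c k := by
  rw [← sum_neg_one_pow_choose_mul_poch k b c, sum_div]
  refine sum_congr rfl fun j hj => ?_
  obtain ⟨l, rfl⟩ := Nat.exists_eq_add_of_le (Nat.lt_succ_iff.mp (mem_range.mp hj))
  obtain ⟨hcj, hcl⟩ := poch_ne_zero_of_add hc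
  rw [poch_neg_natCast, poch_add, Nat.add_sub_cancel_left]
  field_simp

lemma poch_neg_natCast_add (j m : ℕ) :
    poch (-((j + m : ℕ) : ℝ)) j = (-1) ^ j * (j + m).factorial / m.factorial := by
  rw [poch_neg_natCast, eq_div_iff (by positivity), add_comm j m,
    ← Nat.add_choose_mul_factorial_mul_factorial m j]
  push_cast; ring

lemma sum_Ico_mul_poch_neg_natCast (n j : ℕ) (a c : ℝ) (hjn : j ≤ n) (hc : poch c n ≠ 0)
    (hac : poch (a - c - n + 1) j ≠ 0) :
    ∑ k ∈ Ico j (n + 1), poch (-(n : ℝ)) k * poch a k / (poch c k * k.factorial) *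
        poch (-(k : ℝ)) j =
      poch (c - a) n / poch c n * (poch (-(n : ℝ)) j * poch a j / poch (a - c - n + 1) j) := by
  obtain ⟨l, rfl⟩ := Nat.exists_eq_add_of_le hjn
  obtain ⟨hcj, hcl⟩ := poch_ne_zero_of_add hc
  have hterm : ∀ m ∈ range (l + 1),
      poch (-((j + l : ℕ) : ℝ)) (j + m) * poch a (j + m) /
            (poch c (j + m) * (j + m).factorial) * poch (-((j + m : ℕ) : ℝ)) j =
        (-1) ^ j * poch (-((j + l : ℕ) : ℝ)) j * poch a j / poch c j *
          (poch (-(l : ℝ)) m * poch (a + j) m / (poch (c + j) m * m.factorial)) := by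
    intro m hm
    have hml : m ≤ l := Nat.lt_succ_iff.mp (mem_range.mp hm)
    have hcm : poch (c + j) m ≠ 0 := poch_ne_zero_of_le hml hcl
    have hneg : -((j + l : ℕ) : ℝ) + j = -(l : ℝ) := by push_cast; ring
    rw [poch_add, poch_add a, poch_add c, hneg, poch_neg_natCast_add j m]
    field_simp
  have hreflect : poch (c - a) (j + l) =
      (-1) ^ j * poch (c - a) l * poch (a - c - ((j + l : ℕ) : ℝ) + 1) j := by
    rw [add_comm j l, poch_add, poch_reflect (c - a + l)]
    push_cast; ring_nf
  rw [sum_Ico_eq_sum_range, show j + l + 1 - j = l + 1 by omega, sum_congr rfl hterm,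
    ← mul_sum, ← hyper2F1, hyper2F1_eq_poch_div l _ _ hcl, add_sub_add_right_eq_sub,
    hreflect, poch_add c j l]
  field_simp

/-- `₃F₂(-n, a, b; c, d; 1)`. -/
noncomputable def hyper3F2 (n : ℕ) (a b c d : ℝ) : ℝ :=
  ∑ k ∈ range (n + 1),
    poch (-(n : ℝ)) k * poch a k * poch b k / (poch c k * poch d k * k.factorial)

theorem hyper3F2_eq_mul_hyper3F2 (n : ℕ) (a b c d : ℝ) (hc : poch c n ≠ 0)
    (hd : poch d n ≠ 0) (hac : poch (a - c - n + 1) n ≠ 0) :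
    hyper3F2 n a b c d = poch (c - a) n / poch c n * hyper3F2 n a (d - b) d (a - c - n + 1) := by
  set A : ℕ → ℝ := fun k => poch (-(n : ℝ)) k * poch a k / (poch c k * k.factorial)
  set W : ℕ → ℝ := fun j => poch (d - b) j / (poch d j * j.factorial)
  have hexpand : ∀ k ∈ range (n + 1),
      poch (-(n : ℝ)) k * poch a k * poch b k / (poch c k * poch d k * k.factorial) =
        ∑ j ∈ range (k + 1), A k * poch (-(k : ℝ)) j * W j := by
    intro k hk
    have hdk := poch_ne_zero_of_le (Nat.lt_succ_iff.mp (mem_range.mp hk)) hd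
    have hvand := hyper2F1_eq_poch_div k (d - b) d hdk
    rw [sub_sub_cancel] at hvand
    have hfactor :
        ∑ j ∈ range (k + 1), A k * poch (-(k : ℝ)) j * W j = A k * hyper2F1 k (d - b) d := by
      rw [hyper2F1, mul_sum]
      exact sum_congr rfl fun j _ => by simp only [W]; ring
    rw [hfactor, hvand]
    simp only [A]
    field_simp
  have hswap := sum_Ico_Ico_comm 0 (n + 1) fun j k => A k * poch (-(k : ℝ)) j * W j
  simp only [← range_eq_Ico] at hswap
  calc hyper3F2 n a b c d
      = ∑ j ∈ range (n + 1), (∑ k ∈ Ico j (n + 1), A k * poch (-(k : ℝ)) j) * W j := by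
        rw [hyper3F2, sum_congr rfl hexpand, ← hswap]
        simp only [sum_mul]
    _ = poch (c - a) n / poch c n * hyper3F2 n a (d - b) d (a - c - n + 1) := by
        rw [hyper3F2, mul_sum]
        refine sum_congr rfl fun j hj => ?_
        have hjn := Nat.lt_succ_iff.mp (mem_range.mp hj)
        rw [sum_Ico_mul_poch_neg_natCast n j a c hjn hc (poch_ne_zero_of_le hjn hac)]
        simp only [W]
        field_simp

theorem thomae_A1 (n : ℕ) (a b c d : ℝ)
    (hc : ∀ k ≤ n, poch c k ≠ 0) (hd : ∀ k ≤ n, poch d k ≠ 0)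
    (h1 : ∀ k ≤ n, poch (a - c - n + 1) k ≠ 0)
    (h2 : ∀ k ≤ n, poch (a - d - n + 1) k ≠ 0) :
    ∑ k ∈ Finset.range (n + 1),
        (poch (-(n : ℝ)) k * poch a k * poch b k) /
          (poch c k * poch d k * (k.factorial : ℝ)) =
      (poch (c - a) n * poch (d - a) n) / (poch c n * poch d n) *
        ∑ k ∈ Finset.range (n + 1),
          (poch (-(n : ℝ)) k * poch a k * poch (a + b - c - d - n + 1) k) /
            (poch (a - c - n + 1) k * poch (a - d - n + 1) k * (k.factorial : ℝ)) := by
  change hyper3F2 n a b c d = _ * hyper3F2 n a _ _ _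
  rw [hyper3F2_eq_mul_hyper3F2 n a b c d (hc n le_rfl) (hd n le_rfl) (h1 n le_rfl),
    hyper3F2_eq_mul_hyper3F2 n a (d - b) d _ (hd n le_rfl) (h1 n le_rfl) (h2 n le_rfl),
    show a - c - n + 1 - (d - b) = a + b - c - d - n + 1 by ring]
  ring
end

section
/- Let m be a natural number and let N and w be real numbers such that (N)_k ≠ 0 for 0 ≤ k ≤ m+1 and (N+1)_k ≠ 0 for 0 ≤ k ≤ m. Then (m+1)² · w · ∑_{k=0}^m [(−m)_k (m+2)_k (1)_k]/[(2)_k (N+1)_k k!] · w^k = N · [ 1 − ∑_{k=0}^{m+1} [(−1−m)_k (1+m)_k]/[(N)_k k!] · w^k ]. -/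
lemma poch_zero (a : ℝ) : poch a 0 = 1 := by simp [poch]

lemma poch_succ (a : ℝ) (k : ℕ) : poch a (k + 1) = a * poch (a + 1) k := by
  simp [poch, ascPochhammer_succ_left, Polynomial.eval_comp]

lemma poch_one_eval (k : ℕ) : poch 1 k = k.factorial := by
  simp [poch, ascPochhammer_eval_one]

lemma poch_two_eval (k : ℕ) : poch 2 k = (k + 1).factorial := by
  induction k with
  | zero => simp [poch]
  | succ n ih =>
    have : poch 2 (n + 1) = poch 2 n * (2 + n) := by
      simp [poch, ascPochhammer_succ_right, Polynomial.eval_mul]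
    rw [this, ih]
    push_cast [Nat.factorial_succ]
    ring

lemma poch_N_one (N : ℝ) : poch N 1 = N := by simp [poch]

theorem shmaliy_key_summation (m : ℕ) (N w : ℝ)
    (hN : ∀ k ≤ m + 1, poch N k ≠ 0)
    (hN1 : ∀ k ≤ m, poch (N + 1) k ≠ 0) :
    ((m : ℝ) + 1) ^ 2 * w *
        ∑ k ∈ Finset.range (m + 1),
          (poch (-(m : ℝ)) k * poch ((m : ℝ) + 2) k * poch 1 k) /
            (poch 2 k * poch (N + 1) k * (k.factorial : ℝ)) * w ^ k =
      N * (1 - ∑ k ∈ Finset.range (m + 2),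
        (poch (-1 - (m : ℝ)) k * poch (1 + (m : ℝ)) k) /
          (poch N k * (k.factorial : ℝ)) * w ^ k) := by
  have hNne : N ≠ 0 := by have := hN 1 (by omega); rwa [poch_N_one] at this
  have h0 : (poch (-1 - (m:ℝ)) 0 * poch (1+(m:ℝ)) 0) /
      (poch N 0 * ((Nat.factorial 0 : ℕ) : ℝ)) * w ^ 0 = 1 := by
    simp [poch_zero]
  conv_rhs => rw [Finset.sum_range_succ', h0,
    show ∀ S : ℝ, N * (1 - (S + 1)) = (-N) * S from fun S => by ring,
    Finset.mul_sum]
  rw [Finset.mul_sum]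
  refine Finset.sum_congr rfl fun i hi => ?_
  have him : i ≤ m := by simpa [Nat.lt_succ_iff] using hi
  rw [poch_succ, poch_succ, poch_succ, poch_one_eval, poch_two_eval,
    show (-1 - (m:ℝ)) + 1 = -(m:ℝ) by ring, show (1 + (m:ℝ)) + 1 = (m:ℝ) + 2 by ring]
  have hf1 : ((i.factorial : ℕ) : ℝ) ≠ 0 := Nat.cast_ne_zero.mpr i.factorial_ne_zero
  have hf2 : (((i+1).factorial : ℕ) : ℝ) ≠ 0 := Nat.cast_ne_zero.mpr (i+1).factorial_ne_zero
  have hp : poch (N + 1) i ≠ 0 := hN1 i him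
  field_simp
  ring
end
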